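/- For n ≥ 1, the number of points x+yi in Oct_n with both x and y even equals 1 + 2(w_n − 2) + (w_n − 2)² − 2(w_n − w_{n−1})(w_n − w_{n−1} + 1). -/

import Mathlib

/-- The sequence `w_{2k} = 3·2^k`, `w_{2k+1} = 4·2^k`. -/
def w (n : ℕ) : ℤ := if n % 2 = 0 then 3 * 2 ^ (n / 2) else 4 * 2 ^ (n / 2)

/-- `E a b` : lattice points with `|x| ≤ a`, `|y| ≤ a`, `|x|+|y| ≤ b`. -/
noncomputable def E (a b : ℤ) : Finset (ℤ × ℤ) :=
  (Finset.Icc (-a) a ×ˢ Finset.Icc (-a) a).filter fun p => |p.1| + |p.2| ≤ b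

noncomputable def Oct (n : ℕ) : Finset (ℤ × ℤ) := E (w n - 2) (w (n + 1) - 3)

noncomputable def S (n : ℕ) : Finset (ℤ × ℤ) := (Oct n).filter fun p => ¬ (2 ∣ p.1 ∧ 2 ∣ p.2)

/-!
Since `w (n + 1) = 2 * w (n - 1)` and `w n` is even, halving both coordinates maps the even
points of `Oct n` bijectively onto `E (w n / 2 - 1) (w (n - 1) - 2)`. For `a ≤ b ≤ 2 * a`, the
set `E a b` is the square `[-a, a]²` with four triangular corners of `c (c + 1) / 2` points
removed, where `c = 2 * a - b`; counting it column by column gives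
`(2 * a + 1) ^ 2 - 2 * c * (c + 1)`.
-/

open Finset

lemma w_two_mul (k : ℕ) : w (2 * k) = 3 * 2 ^ k := by
  simp [w]

lemma w_two_mul_add_one (k : ℕ) : w (2 * k + 1) = 4 * 2 ^ k := by
  simp [w, Nat.add_mod, Nat.add_div]

lemma w_add_two (n : ℕ) : w (n + 2) = 2 * w n := by
  obtain ⟨k, rfl | rfl⟩ := Nat.even_or_odd' n
  · rw [show 2 * k + 2 = 2 * (k + 1) by ring, w_two_mul, w_two_mul]; ring
  · rw [show 2 * k + 1 + 2 = 2 * (k + 1) + 1 by ring, w_two_mul_add_one, w_two_mul_add_one]; ring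

lemma two_dvd_w_succ (n : ℕ) : 2 ∣ w (n + 1) := by
  obtain ⟨k, rfl | rfl⟩ := Nat.even_or_odd' n
  · rw [w_two_mul_add_one]; exact ⟨2 * 2 ^ k, by ring⟩
  · rw [show 2 * k + 1 + 1 = 2 * (k + 1) by ring, w_two_mul]; exact ⟨3 * 2 ^ k, by ring⟩

lemma w_le_w_succ (n : ℕ) : w n ≤ w (n + 1) := by
  obtain ⟨k, rfl | rfl⟩ := Nat.even_or_odd' n
  · rw [w_two_mul_add_one, w_two_mul]
    linarith [pow_pos (two_pos : (0 : ℤ) < 2) k]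
  · rw [show 2 * k + 1 + 1 = 2 * (k + 1) by ring, w_two_mul, w_two_mul_add_one, pow_succ]
    linarith [pow_pos (two_pos : (0 : ℤ) < 2) k]

lemma w_succ_add_two_le (n : ℕ) : w (n + 1) + 2 ≤ 2 * w n := by
  obtain ⟨k, rfl | rfl⟩ := Nat.even_or_odd' n
  · rw [w_two_mul_add_one, w_two_mul]
    linarith [one_le_pow₀ (one_le_two : (1 : ℤ) ≤ 2) (n := k)]
  · rw [show 2 * k + 1 + 1 = 2 * (k + 1) by ring, w_two_mul, w_two_mul_add_one, pow_succ]
    linarith [one_le_pow₀ (one_le_two : (1 : ℤ) ≤ 2) (n := k)]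

lemma mem_E {a b : ℤ} {p : ℤ × ℤ} : p ∈ E a b ↔ |p.1| ≤ a ∧ |p.2| ≤ a ∧ |p.1| + |p.2| ≤ b := by
  simp only [E, mem_filter, mem_product, mem_Icc, ← abs_le, and_assoc]

lemma card_E_eq_sum {a b : ℤ} (hab : a ≤ b) :
    ((E a b).card : ℤ) = ∑ x ∈ Icc (-a) a, (2 * a + 1 - 2 * max 0 (|x| - (b - a))) := by
  rw [E, card_filter, sum_product, Nat.cast_sum]
  refine sum_congr rfl fun x hx => ?_
  rw [mem_Icc, ← abs_le] at hx
  rw [← card_filter]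
  have hfiber : (Icc (-a) a).filter (fun y => |(x, y).1| + |(x, y).2| ≤ b)
      = Icc (-(a - max 0 (|x| - (b - a)))) (a - max 0 (|x| - (b - a))) := by
    ext y
    simp only [mem_filter, mem_Icc, ← abs_le]
    omega
  rw [hfiber, Int.card_Icc, Int.toNat_of_nonneg (by have := abs_nonneg x; omega)]
  ring

lemma sum_max_zero_abs_sub {t a : ℤ} (ht : 0 ≤ t) (hta : t ≤ a) :
    ∑ x ∈ Icc (-a) a, max 0 (|x| - t) = (a - t) * (a - t + 1) := by
  induction a, hta using Int.leInduction with
  | base =>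
    refine (sum_eq_zero fun x hx => ?_).trans (by ring)
    rw [mem_Icc, ← abs_le] at hx
    omega
  | succ a hta ih =>
    have hIcc : Icc (-(a + 1)) (a + 1) = insert (-(a + 1)) (insert (a + 1) (Icc (-a) a)) := by
      ext x; simp only [mem_insert, mem_Icc]; omega
    rw [hIcc, sum_insert (by simp; omega), sum_insert (by simp), ih, abs_neg,
      abs_of_nonneg (by omega), max_eq_right (by omega)]
    ring

lemma card_E {a b : ℤ} (hab : a ≤ b) (hba : b ≤ 2 * a) :
    ((E a b).card : ℤ) = (2 * a + 1) ^ 2 - 2 * (2 * a - b) * (2 * a - b + 1) := by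
  rw [card_E_eq_sum hab, sum_sub_distrib, sum_const, ← mul_sum,
    sum_max_zero_abs_sub (by omega) (by omega), Int.card_Icc, nsmul_eq_mul,
    Int.toNat_of_nonneg (by omega)]
  ring

lemma card_filter_even_E (a b : ℤ) :
    ((E (2 * a) (2 * b + 1)).filter fun p => 2 ∣ p.1 ∧ 2 ∣ p.2).card = (E a b).card := by
  symm
  refine card_nbij' (fun p => (2 * p.1, 2 * p.2)) (fun p => (p.1 / 2, p.2 / 2)) ?_ ?_ ?_ ?_
  · rintro ⟨x, y⟩ h
    simp only [mem_coe, mem_filter, mem_E, abs_mul, abs_two] at h ⊢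
    omega
  · rintro ⟨x, y⟩ h
    simp only [mem_coe, mem_filter, mem_E] at h
    obtain ⟨h, ⟨u, rfl⟩, ⟨v, rfl⟩⟩ := h
    simp only [mem_coe, mem_E, Int.mul_ediv_cancel_left _ two_ne_zero, abs_mul, abs_two] at h ⊢
    omega
  · intro p _
    simp
  · rintro ⟨x, y⟩ h
    simp only [mem_coe, mem_filter] at h
    obtain ⟨_, ⟨u, rfl⟩, ⟨v, rfl⟩⟩ := h
    simp

theorem stmt_5 (n : ℕ) (hn : 1 ≤ n) :
    (((Oct n).filter fun p : ℤ × ℤ => 2 ∣ p.1 ∧ 2 ∣ p.2).card : ℤ)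
      = 1 + 2 * (w n - 2) + (w n - 2) ^ 2
        - 2 * (w n - w (n - 1)) * (w n - w (n - 1) + 1) := by
  obtain ⟨m, rfl⟩ : ∃ m, n = m + 1 := ⟨n - 1, by omega⟩
  obtain ⟨c, hc⟩ := two_dvd_w_succ m
  have hmono := w_le_w_succ m
  have hgrowth := w_succ_add_two_le m
  have hOct : Oct (m + 1) = E (2 * (c - 1)) (2 * (w m - 2) + 1) := by
    rw [Oct, w_add_two, hc]
    congr 1 <;> ring
  rw [hOct, card_filter_even_E, card_E (by omega) (by omega), Nat.add_sub_cancel, hc]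
  ring
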